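/- Let F be a finite field with q = |F| elements and K a finite field extension of F. Let f₁, f₂ ∈ K[X] be nonzero linearized polynomials of q-degrees d₁ and d₂, let S₁, S₂ be linearized polynomials with S₁ ∘ f₁ + S₂ ∘ f₂ = X, and let h ∈ K[X] be a nonzero linearized polynomial of q-degree d₁ + d₂ such that f₁ and f₂ both right-divide h and every linearized polynomial right-divisible by both f₁ and f₂ is right-divisible by h (h is a left least common multiple of f₁ and f₂). Let g ∈ K[X] be a linearized polynomial with deg g < q^{d₁+d₂}, and let r₁, r₂ be the right remainders of g by f₁ and f₂ respectively. Then the right remainder of r₂ ∘ S₁ ∘ f₁ + r₁ ∘ S₂ ∘ f₂ under right division by h equals g. -/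

import Mathlib

open Polynomial

/-- A polynomial over `K` is linearized (a `q`-polynomial) if every exponent in
its support is a power of `q`. -/
def IsLinearized (q : ℕ) {K : Type*} [Semiring K] (p : K[X]) : Prop :=
  ∀ n ∈ p.support, ∃ i : ℕ, n = q ^ i

/-- `B` right-divides `A` (among linearized polynomials): `A = Q ∘ B` for some
linearized `Q`. -/
def LinRightDvd (q : ℕ) {K : Type*} [CommSemiring K] (B A : K[X]) : Prop :=
  ∃ Q : K[X], IsLinearized q Q ∧ A = Q.comp B

section Helpers

variable {K : Type*} [Field K] {q p n : ℕ}

lemma lin_add {f g : K[X]} (hf : IsLinearized q f) (hg : IsLinearized q g) :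
    IsLinearized q (f + g) := fun m hm => by
  rcases Finset.mem_union.mp (Polynomial.support_add hm) with h | h
  exacts [hf m h, hg m h]

lemma lin_neg {f : K[X]} (hf : IsLinearized q f) : IsLinearized q (-f) := fun m hm => by
  exact hf m (by simpa using hm)

lemma lin_sub {f g : K[X]} (hf : IsLinearized q f) (hg : IsLinearized q g) :
    IsLinearized q (f - g) := by
  rw [sub_eq_add_neg]; exact lin_add hf (lin_neg hg)

variable [Fact p.Prime] [CharP K p] (hq : q = p ^ n)
include hq

lemma lin_pow_q {f : K[X]} (hf : IsLinearized q f) : IsLinearized q (f ^ q) := by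
  have key : f ^ q = ∑ j ∈ f.support, monomial (j * q) (f.coeff j ^ q) := by
    conv_lhs => rw [Polynomial.as_sum_support f]
    subst hq
    rw [← iterateFrobenius_def (R := K[X]), map_sum]
    refine Finset.sum_congr rfl fun j _ => ?_
    rw [iterateFrobenius_def, Polynomial.monomial_pow]
  intro m hm
  rw [key] at hm
  have : ∃ j ∈ f.support, ((monomial (j * q)) (f.coeff j ^ q)).coeff m ≠ 0 := by
    by_contra hc
    push_neg at hc
    apply Polynomial.mem_support_iff.mp hm
    rw [Polynomial.finset_sum_coeff]
    exact Finset.sum_eq_zero hc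
  obtain ⟨j, hj, hcm⟩ := this
  rw [Polynomial.coeff_monomial] at hcm
  have hmj : m = j * q := by by_contra h; simp [Ne.symm h] at hcm
  obtain ⟨i, rfl⟩ := hf j hj
  exact ⟨i + 1, by rw [hmj, pow_succ]⟩

lemma lin_pow_q_pow {f : K[X]} (hf : IsLinearized q f) (i : ℕ) :
    IsLinearized q (f ^ q ^ i) := by
  induction i with
  | zero => simpa using hf
  | succ i ih => rw [pow_succ, pow_mul]; exact lin_pow_q hq ih

lemma lin_comp {P f : K[X]} (hP : IsLinearized q P) (hf : IsLinearized q f) :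
    IsLinearized q (P.comp f) := by
  rw [Polynomial.comp_eq_sum_left, Polynomial.sum_def]
  intro m hm
  have : ∃ j ∈ P.support, (C (P.coeff j) * f ^ j).coeff m ≠ 0 := by
    by_contra hc
    push_neg at hc
    apply Polynomial.mem_support_iff.mp hm
    rw [Polynomial.finset_sum_coeff]
    exact Finset.sum_eq_zero hc
  obtain ⟨j, hj, hcm⟩ := this
  obtain ⟨i, rfl⟩ := hP j hj
  have hmem : m ∈ (f ^ q ^ i).support := by
    rw [Polynomial.mem_support_iff]
    intro h0
    apply hcm
    rw [Polynomial.coeff_C_mul, h0, mul_zero]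
  exact lin_pow_q_pow hq hf i m hmem

lemma lin_comp_add {P : K[X]} (hP : IsLinearized q P) (A B : K[X]) :
    P.comp (A + B) = P.comp A + P.comp B := by
  rw [Polynomial.comp_eq_sum_left, Polynomial.comp_eq_sum_left,
    Polynomial.comp_eq_sum_left, Polynomial.sum_def, Polynomial.sum_def,
    Polynomial.sum_def, ← Finset.sum_add_distrib]
  refine Finset.sum_congr rfl fun j hj => ?_
  obtain ⟨i, rfl⟩ := hP j hj
  rw [hq, ← pow_mul, add_pow_char_pow, mul_add]

lemma lin_coeff_zero {P : K[X]} (hP : IsLinearized q P) : P.coeff 0 = 0 := by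
  by_contra h0
  obtain ⟨i, hi⟩ := hP 0 (Polynomial.mem_support_iff.mpr h0)
  have : 0 < q ^ i := by
    subst hq; exact pow_pos (pow_pos (Fact.out (p := p.Prime)).pos n) i
  omega

lemma lin_comp_neg {P : K[X]} (hP : IsLinearized q P) (A : K[X]) :
    P.comp (-A) = -(P.comp A) := by
  have h := lin_comp_add hq hP A (-A)
  rw [add_neg_cancel] at h
  have h0 : P.comp 0 = 0 := by
    rw [show (0 : K[X]) = C 0 by simp, Polynomial.comp_C,
      ← Polynomial.coeff_zero_eq_eval_zero, lin_coeff_zero hq hP, map_zero]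
  rw [h0] at h
  exact eq_neg_of_add_eq_zero_right h.symm

end Helpers

/-- Linearized Chinese Remainder Theorem for two moduli: if
`deg g < q^(d₁+d₂)`, then the right remainder of
`π₂(g) ∘ S₁ ∘ f₁ + π₁(g) ∘ S₂ ∘ f₂` by the left lcm `h` of `f₁` and `f₂`
equals `g`. -/
theorem crt_two_moduli (F K : Type*) [Field F] [Fintype F]
    [Field K] [Fintype K] [Algebra F K]
    (q : ℕ) (hq : q = Fintype.card F)
    (d₁ d₂ : ℕ) (f₁ f₂ S₁ S₂ h g r₁ r₂ : K[X])
    (hf₁ : IsLinearized q f₁) (hf₂ : IsLinearized q f₂)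
    (hS₁ : IsLinearized q S₁) (hS₂ : IsLinearized q S₂)
    (hh : IsLinearized q h) (hg : IsLinearized q g)
    (hr₁ : IsLinearized q r₁) (hr₂ : IsLinearized q r₂)
    (hf₁0 : f₁ ≠ 0) (hf₂0 : f₂ ≠ 0) (hh0 : h ≠ 0)
    (hd₁ : f₁.natDegree = q ^ d₁) (hd₂ : f₂.natDegree = q ^ d₂)
    (hdh : h.natDegree = q ^ (d₁ + d₂))
    (hBez : S₁.comp f₁ + S₂.comp f₂ = X)
    (hlcm₁ : LinRightDvd q f₁ h ∧ LinRightDvd q f₂ h)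
    (hlcm₂ : ∀ p : K[X], IsLinearized q p →
      LinRightDvd q f₁ p → LinRightDvd q f₂ p → LinRightDvd q h p)
    (hdeg : g.degree < (q ^ (d₁ + d₂) : ℕ))
    (hrem₁ : (∃ Q : K[X], IsLinearized q Q ∧ g = Q.comp f₁ + r₁) ∧
      r₁.degree < f₁.degree)
    (hrem₂ : (∃ Q : K[X], IsLinearized q Q ∧ g = Q.comp f₂ + r₂) ∧
      r₂.degree < f₂.degree) :
    ∃ Q : K[X], IsLinearized q Q ∧
      r₂.comp (S₁.comp f₁) + r₁.comp (S₂.comp f₂) = Q.comp h + g := by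
  haveI := Fact.mk (CharP.char_is_prime F (ringChar F))
  haveI : CharP K (ringChar F) :=
    charP_of_injective_algebraMap (algebraMap F K).injective (ringChar F)
  obtain ⟨n, -, hcard⟩ := FiniteField.card F (ringChar F)
  have hq' : q = ringChar F ^ (n : ℕ) := hq.trans hcard
  obtain ⟨⟨Q₁, hQ₁lin, hgQ₁⟩, -⟩ := hrem₁
  obtain ⟨⟨Q₂, hQ₂lin, hgQ₂⟩, -⟩ := hrem₂
  set E := r₂.comp (S₁.comp f₁) + r₁.comp (S₂.comp f₂) - g with hE
  have hElin : IsLinearized q E :=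
    lin_sub (lin_add (lin_comp hq' hr₂ (lin_comp hq' hS₁ hf₁))
      (lin_comp hq' hr₁ (lin_comp hq' hS₂ hf₂))) hg
  have hA : r₁ = r₁.comp (S₁.comp f₁) + r₁.comp (S₂.comp f₂) := by
    have := lin_comp_add hq' hr₁ (S₁.comp f₁) (S₂.comp f₂)
    rw [hBez, Polynomial.comp_X] at this
    exact this
  have hB : r₂ = r₂.comp (S₁.comp f₁) + r₂.comp (S₂.comp f₂) := by
    have := lin_comp_add hq' hr₂ (S₁.comp f₁) (S₂.comp f₂)
    rw [hBez, Polynomial.comp_X] at this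
    exact this
  have key1 : E = ((r₂ - r₁).comp S₁ - Q₁).comp f₁ := by
    rw [Polynomial.sub_comp, Polynomial.comp_assoc, Polynomial.sub_comp, hE]
    linear_combination -hA - hgQ₁
  have key2 : E = ((r₁ - r₂).comp S₂ - Q₂).comp f₂ := by
    rw [Polynomial.sub_comp, Polynomial.comp_assoc, Polynomial.sub_comp, hE]
    linear_combination -hB - hgQ₂
  obtain ⟨Q, hQlin, hQE⟩ := hlcm₂ E hElin
    ⟨(r₂ - r₁).comp S₁ - Q₁, lin_sub (lin_comp hq' (lin_sub hr₂ hr₁) hS₁) hQ₁lin, key1⟩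
    ⟨(r₁ - r₂).comp S₂ - Q₂, lin_sub (lin_comp hq' (lin_sub hr₁ hr₂) hS₂) hQ₂lin, key2⟩
  exact ⟨Q, hQlin, by rw [hE] at hQE; linear_combination hQE⟩
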